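/- If (r, u, ψ) solves the arclength capillary system on [0, ℓ] with r(0) = 0, ψ(0) = 0, and u, ψ continuous at 0 with ψ' bounded near 0, and if u(s) > 0 and 0 ≤ ψ(s) < π/2 on (0, ℓ], then u is strictly increasing on [0, ℓ]. -/
import Mathlib


open Real Set

open Topology Filter

theorem stmt_12 (κ ℓ : ℝ) (hκ : 0 < κ) (hℓ : 0 < ℓ)
    (r u ψ : ℝ → ℝ)
    (hrc : ContinuousOn r (Icc 0 ℓ)) (huc : ContinuousOn u (Icc 0 ℓ))
    (hψc : ContinuousOn ψ (Icc 0 ℓ))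
    (hr : ∀ s ∈ Ioc (0:ℝ) ℓ, 0 < r s)
    (h1 : ∀ s ∈ Ioc (0:ℝ) ℓ, HasDerivAt r (Real.cos (ψ s)) s)
    (h2 : ∀ s ∈ Ioc (0:ℝ) ℓ, HasDerivAt u (Real.sin (ψ s)) s)
    (h3 : ∀ s ∈ Ioc (0:ℝ) ℓ, HasDerivAt ψ (κ * u s - Real.sin (ψ s) / r s) s)
    (hr0 : r 0 = 0) (hψ0 : ψ 0 = 0)
    (hbdd : ∃ δ > 0, ∃ M : ℝ, ∀ s ∈ Ioc 0 (min δ ℓ),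
      |κ * u s - Real.sin (ψ s) / r s| ≤ M)
    (hu : ∀ s ∈ Ioc (0:ℝ) ℓ, 0 < u s)
    (hψ : ∀ s ∈ Ioc (0:ℝ) ℓ, 0 ≤ ψ s ∧ ψ s < Real.pi / 2) :
    StrictMonoOn u (Icc 0 ℓ) := by
  -- First show ψ > 0 on (0, ℓ]
  have hψpos : ∀ s ∈ Ioc (0:ℝ) ℓ, 0 < ψ s := by
    intro s0 hs0
    rcases (hψ s0 hs0).1.lt_or_eq with h | h
    · exact h
    exfalso
    have hd : HasDerivAt ψ (κ * u s0) s0 := by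
      have := h3 s0 hs0
      rw [← h, Real.sin_zero, zero_div, sub_zero] at this
      exact this
    have hpos : 0 < κ * u s0 := mul_pos hκ (hu s0 hs0)
    have hslope : ∀ᶠ x in 𝓝[≠] s0, 0 < slope ψ s0 x :=
      (hasDerivAt_iff_tendsto_slope.mp hd).eventually (eventually_gt_nhds hpos)
    have hslope' : ∀ᶠ x in 𝓝[<] s0, 0 < slope ψ s0 x :=
      hslope.filter_mono (nhdsWithin_mono s0 (fun x hx => ne_of_lt hx))
    have hmem : Ioo (0:ℝ) s0 ∈ 𝓝[<] s0 :=
      Ioo_mem_nhdsLT_of_mem ⟨hs0.1, le_refl s0⟩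
    rcases (hslope'.and (eventually_of_mem hmem (fun x hx => hx))).exists with ⟨x, hx1, hx2⟩
    have hxIoc : x ∈ Ioc (0:ℝ) ℓ := ⟨hx2.1, le_of_lt (lt_of_lt_of_le hx2.2 hs0.2)⟩
    have hψx : 0 ≤ ψ x := (hψ x hxIoc).1
    have : slope ψ s0 x = ψ x / (x - s0) := by
      simp [slope_def_field, ← h]
    rw [this] at hx1
    have hneg : x - s0 < 0 := sub_neg.mpr hx2.2
    rcases div_pos_iff.mp hx1 with ⟨_, h2'⟩ | ⟨h1', _⟩
    · linarith
    · linarith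
  apply strictMonoOn_of_deriv_pos (convex_Icc 0 ℓ) huc
  intro x hx
  rw [interior_Icc] at hx
  have hxIoc : x ∈ Ioc (0:ℝ) ℓ := ⟨hx.1, le_of_lt hx.2⟩
  rw [(h2 x hxIoc).deriv]
  exact Real.sin_pos_of_pos_of_lt_pi (hψpos x hxIoc)
    (lt_trans (hψ x hxIoc).2 (by linarith [Real.pi_pos]))
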